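/- arXiv:2410.11572 — 3 statements merged into one kernel-verified Lean document; each statement's English description precedes it below -/
import Mathlib

section
/- For all functions F, G : Q³ → ℕ ∪ {#} such that ∑_{q2} F(q1,q2,q3) = ∑_{q4} G(q1,q3,q4) for every q1, q3, there exists H : Q⁴ → ℕ ∪ {#} such that ∑_{q4} H(q1,q2,q3,q4) = F(q1,q2,q3) for all q1,q2,q3 and ∑_{q2} H(q1,q2,q3,q4) = G(q1,q3,q4) for all q1,q3,q4. -/
/-!
For fixed `q1, q3` this is a transportation problem in `ℕ ∪ {#}`: find a `Q × Q` matrix with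
row sums `F q1 · q3` and column sums `G q1 q3 ·`. Over `ℕ` it is solved by peeling off one unit
at a time from a positive row and a positive column. In `ℕ ∪ {#}` take the `ℕ`-solution for the
values read with `# ↦ 0`, and put `#` exactly in the rows and columns whose marginal is `#`. A `#`
marginal reads as `0`, so the `ℕ`-solution vanishes on its line; and since both sides of the
hypothesis are `#` together, a row with a numeric marginal meets some column with a numeric
marginal, so its sum is numeric.
-/

/-- ℕ extended with an extra element `#` (represented by `none`),
which is an identity for addition and incomparable with integers. -/
abbrev NS := Option ℕ

def NS.sharp : NS := none

def NS.add : NS → NS → NS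
  | none, x => x
  | some a, none => some a
  | some a, some b => some (a + b)

instance : Add NS := ⟨NS.add⟩
instance : Zero NS := ⟨none⟩

instance : AddCommMonoid NS where
  add_assoc a b c := by
    show NS.add (NS.add a b) c = NS.add a (NS.add b c)
    cases a <;> cases b <;> cases c <;> simp [NS.add, Nat.add_assoc]
  zero_add a := by cases a <;> rfl
  add_zero a := by cases a <;> rfl
  add_comm a b := by
    show NS.add a b = NS.add b a
    cases a <;> cases b <;> simp [NS.add, Nat.add_comm]
  nsmul := nsmulRec

/-- The order on `NS`: `#` is only comparable with `#`. -/
def NS.le : NS → NS → Prop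
  | none, none => True
  | some a, some b => a ≤ b
  | _, _ => False

def NS.lt (x y : NS) : Prop := NS.le x y ∧ x ≠ y

lemma Pi.exists_eq_add_single_one {ι : Type*} [DecidableEq ι] {f : ι → ℕ} {a : ι}
    (ha : f a ≠ 0) : ∃ f' : ι → ℕ, f = f' + Pi.single a 1 :=
  ⟨f - Pi.single a 1, by ext i; rcases eq_or_ne i a with rfl | hi <;> simp [*]; omega⟩

theorem exists_nat_matrix_of_sum_eq {ι κ : Type*} [Fintype ι] [Fintype κ]
    (f : ι → ℕ) (g : κ → ℕ) (h : ∑ i, f i = ∑ j, g j) :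
    ∃ M : ι → κ → ℕ, (∀ i, ∑ j, M i j = f i) ∧ (∀ j, ∑ i, M i j = g j) := by
  classical
  induction hN : ∑ i, f i generalizing f g with
  | zero =>
    refine ⟨0, fun i => ?_, fun j => ?_⟩
    · simpa using ((Finset.sum_eq_zero_iff.mp hN) i (Finset.mem_univ i)).symm
    · simpa using ((Finset.sum_eq_zero_iff.mp (h ▸ hN)) j (Finset.mem_univ j)).symm
  | succ N ih =>
    obtain ⟨a, -, ha⟩ := Finset.exists_ne_zero_of_sum_ne_zero (s := .univ) (f := f) (by omega)
    obtain ⟨b, -, hb⟩ := Finset.exists_ne_zero_of_sum_ne_zero (s := .univ) (f := g) (by omega)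
    obtain ⟨f', rfl⟩ := Pi.exists_eq_add_single_one ha
    obtain ⟨g', rfl⟩ := Pi.exists_eq_add_single_one hb
    simp only [Pi.add_apply, Finset.sum_add_distrib, Finset.sum_pi_single', Finset.mem_univ,
      if_true] at h hN
    obtain ⟨M, hrow, hcol⟩ := ih f' g' (by omega) (by omega)
    refine ⟨fun i j => M i j + (Pi.single a 1 : ι → ℕ) i * (Pi.single b 1 : κ → ℕ) j,
      fun i => ?_, fun j => ?_⟩
    · simp [Finset.sum_add_distrib, ← Finset.mul_sum, hrow]
    · simp [Finset.sum_add_distrib, ← Finset.sum_mul, hcol]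

namespace NS

lemma add_eq_none_iff {x y : NS} : x + y = none ↔ x = none ∧ y = none := by
  show NS.add x y = none ↔ _
  cases x <;> cases y <;> simp [NS.add]

instance : Subsingleton (AddUnits NS) where
  allEq u v :=
    have val_eq_none (w : AddUnits NS) : (w : NS) = none := (add_eq_none_iff.mp w.val_neg).1
    AddUnits.ext ((val_eq_none u).trans (val_eq_none v).symm)

def toNat : NS →+ ℕ where
  toFun x := x.getD 0
  map_zero' := rfl
  map_add' x y := by
    show (NS.add x y).getD 0 = _
    cases x <;> cases y <;> simp [NS.add]

lemma sum_eq_none_iff {ι : Type*} {s : Finset ι} {x : ι → NS} :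
    ∑ i ∈ s, x i = none ↔ ∀ i ∈ s, x i = none :=
  Finset.sum_eq_zero_iff

lemma eq_some_toNat {x : NS} (hx : x ≠ none) : x = some (toNat x) :=
  (Option.getD_of_ne_none hx 0).symm

variable {ι κ : Type*}

def liftMatrix (f : ι → NS) (g : κ → NS) (M : ι → κ → ℕ) (i : ι) (j : κ) : NS :=
  if f i = none ∨ g j = none then none else some (M i j)

lemma liftMatrix_swap (f : ι → NS) (g : κ → NS) (M : ι → κ → ℕ) (i : ι) (j : κ) :
    liftMatrix g f (Function.swap M) j i = liftMatrix f g M i j := by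
  simp only [liftMatrix, or_comm, Function.swap]

lemma sum_liftMatrix_row [Fintype ι] [Fintype κ] {f : ι → NS} {g : κ → NS}
    (h : ∑ i, f i = ∑ j, g j) {M : ι → κ → ℕ}
    (hrow : ∀ i, ∑ j, M i j = toNat (f i)) (hcol : ∀ j, ∑ i, M i j = toNat (g j)) (i : ι) :
    ∑ j, liftMatrix f g M i j = f i := by
  by_cases hfi : f i = none
  · simp only [liftMatrix, hfi, true_or, if_true]
    exact sum_eq_none_iff.mpr fun _ _ => rfl
  obtain ⟨j₀, -, hj₀⟩ : ∃ j ∈ Finset.univ, g j ≠ none := by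
    have : ∑ j, g j ≠ none := h ▸ fun hs => hfi (sum_eq_none_iff.mp hs i (Finset.mem_univ i))
    simpa using mt sum_eq_none_iff.mpr this
  have hne : ∑ j, liftMatrix f g M i j ≠ none := fun hs => by
    simpa [liftMatrix, hfi, hj₀] using sum_eq_none_iff.mp hs j₀ (Finset.mem_univ _)
  have hentry (j : κ) : toNat (liftMatrix f g M i j) = M i j := by
    by_cases hgj : g j = none
    · have : M i j = 0 :=
        Finset.sum_eq_zero_iff.mp ((hcol j).trans (by rw [hgj]; rfl)) i (Finset.mem_univ i)
      simp only [liftMatrix, hgj, or_true, if_true, this]; rfl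
    · simp only [liftMatrix, hfi, hgj, or_self, if_false]; rfl
  calc ∑ j, liftMatrix f g M i j = some (toNat (∑ j, liftMatrix f g M i j)) := eq_some_toNat hne
    _ = some (toNat (f i)) := by simp only [map_sum, hentry, hrow]
    _ = f i := (eq_some_toNat hfi).symm

theorem exists_matrix_of_sum_eq [Fintype ι] [Fintype κ] (f : ι → NS) (g : κ → NS)
    (h : ∑ i, f i = ∑ j, g j) :
    ∃ M : ι → κ → NS, (∀ i, ∑ j, M i j = f i) ∧ (∀ j, ∑ i, M i j = g j) := by
  obtain ⟨M, hrow, hcol⟩ :=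
    exists_nat_matrix_of_sum_eq (toNat ∘ f) (toNat ∘ g)
      (by simp only [Function.comp_apply, ← map_sum, h])
  refine ⟨liftMatrix f g M, sum_liftMatrix_row h hrow hcol, fun j => ?_⟩
  simp only [← liftMatrix_swap f g M]
  exact sum_liftMatrix_row h.symm hcol hrow j

end NS

/-- For all `F, G : Q³ → ℕ ∪ {#}` such that
`∑_{q2} F(q1,q2,q3) = ∑_{q4} G(q1,q3,q4)` for every `q1, q3`, there exists
`H : Q⁴ → ℕ ∪ {#}` with `∑_{q4} H(q1,q2,q3,q4) = F(q1,q2,q3)` and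
`∑_{q2} H(q1,q2,q3,q4) = G(q1,q3,q4)`. -/
theorem exists_fourway_witness {Q : Type} [Fintype Q]
    (F G : Q → Q → Q → NS)
    (h : ∀ q1 q3, (∑ q2, F q1 q2 q3) = ∑ q4, G q1 q3 q4) :
    ∃ H : Q → Q → Q → Q → NS,
      (∀ q1 q2 q3, (∑ q4, H q1 q2 q3 q4) = F q1 q2 q3) ∧
      (∀ q1 q3 q4, (∑ q2, H q1 q2 q3 q4) = G q1 q3 q4) := by
  choose M hrow hcol using fun q1 q3 => NS.exists_matrix_of_sum_eq _ _ (h q1 q3)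
  exact ⟨fun q1 q2 q3 q4 => M q1 q3 q2 q4, fun q1 q2 q3 => hrow q1 q3 q2,
    fun q1 q3 q4 => hcol q1 q3 q4⟩
end

section
/- In an immediate observation population protocol, a step c →t c' in the product system (i.e., an accelerated step γ →(t^k) γ' for some k ≥ 1 together with a matching Rabin transition) exists if and only if there is a transfer flow tf in the set T(t) associated to transition t such that c →tf c'. -/
/-- A transfer flow: an agent part `f` and a control part `(src, dst)`. -/
structure TF (Q L : Type) where
  f : Q → Q → NS
  src : L
  dst : L

/-- The order `⪯` on transfer flows. -/
def TF.le {Q L : Type} (t1 t2 : TF Q L) : Prop :=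
  t1.src = t2.src ∧ t1.dst = t2.dst ∧ ∀ q q', NS.le (t1.f q q') (t2.f q q')

/-- The product `tf1 ⊗ tf2` of two transfer flows. -/
def TF.prod {Q L : Type} [Fintype Q] (t1 t2 : TF Q L) : Set (TF Q L) :=
  { t | t1.dst = t2.src ∧ t.src = t1.src ∧ t.dst = t2.dst ∧
    ∃ H : Q → Q → Q → NS,
      (∀ q1 q3, (∑ q2, H q1 q2 q3) = t.f q1 q3) ∧
      (∀ q1 q2, NS.le (t1.f q1 q2) (∑ q3, H q1 q2 q3)) ∧
      (∀ q2 q3, NS.le (t2.f q2 q3) (∑ q1, H q1 q2 q3)) }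

/-- The weight of a transfer flow: `#` contributes nothing. -/
def TF.weight {Q L : Type} [Fintype Q] (t : TF Q L) : ℕ :=
  ∑ q, ∑ q', (t.f q q').getD 0

/-- Minimality with respect to `⪯` within a set of transfer flows. -/
def MinimalIn {Q L : Type} (S : Set (TF Q L)) (t : TF Q L) : Prop :=
  t ∈ S ∧ ∀ t' ∈ S, TF.le t' t → t' = t
/-- An immediate observation transition `(q1, q2) → (q1, q3)`, written
`q2 --q1--> q3`: an agent in `src` observes an agent in `obs` and moves
to `dst`. -/
structure IOTrans (Q : Type) where
  obs : Q
  src : Q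
  dst : Q

/-- One step of the protocol using transition `t = (q1,q2) → (q1,q3)`:
one agent moves from `t.src` to `t.dst` while observing an agent in `t.obs`. -/
def ProtStep {Q : Type} [DecidableEq Q] (t : IOTrans Q) (γ γ' : Q → ℕ) : Prop :=
  1 ≤ γ t.obs ∧ 1 ≤ γ t.src ∧ (t.obs = t.src → 2 ≤ γ t.obs) ∧
  ∀ q, γ' q = γ q - (if q = t.src then 1 else 0) + (if q = t.dst then 1 else 0)

/-- `c1 →tf c2`: a step from configuration `c1` to `c2` following a
transfer flow `tf`, via a step witness `g ≥ f`. -/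
def FlowStep {Q L : Type} [Fintype Q] (tf : TF Q L) (c1 c2 : (Q → ℕ) × L) : Prop :=
  c1.2 = tf.src ∧ c2.2 = tf.dst ∧
  ∃ g : Q → Q → NS,
    (∀ q q', NS.le (tf.f q q') (g q q')) ∧
    (∀ q, (some (c1.1 q) : NS) = ∑ q', g q q') ∧
    (∀ q, (some (c2.1 q) : NS) = ∑ q', g q' q)

/-- The set `T(t)` of transfer flows associated with a transition
`t = (q1,q2) → (q1,q3)` of the IOPP, where `Tr` is the transition function of
the deterministic Rabin automaton. -/
def Tset {Q L : Type} [DecidableEq Q] (Tr : L → IOTrans Q → L) (t : IOTrans Q) :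
    Set (TF Q L) :=
  { tf | Tr tf.src t = tf.dst ∧
    ((t.obs ≠ t.src ∨ t.obs ≠ t.dst) →
      NS.le (some 1) (tf.f t.obs t.obs) ∧ NS.le (some 1) (tf.f t.src t.dst)) ∧
    ((t.obs = t.src ∧ t.obs = t.dst) → NS.le (some 2) (tf.f t.obs t.obs)) ∧
    (∀ q, q ≠ t.obs → (q, q) ≠ (t.src, t.dst) → NS.le (some 0) (tf.f q q)) ∧
    (∀ q q', q ≠ q' → (q, q') ≠ (t.src, t.dst) → tf.f q q' = NS.sharp) }

section Helpers

lemma NS.some_le_some {n m : ℕ} : NS.le (some n) (some m) ↔ n ≤ m := Iff.rfl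

lemma NS.le_some {n : ℕ} {x : NS} (h : NS.le (some n) x) : ∃ m, x = some m ∧ n ≤ m := by
  cases x with
  | none => exact absurd h (by simp [NS.le])
  | some m => exact ⟨m, rfl, h⟩

lemma NS.none_le {x : NS} (h : NS.le none x) : x = none := by
  cases x with
  | none => rfl
  | some m => exact absurd h (by simp [NS.le])

lemma NS.some_add_some (a b : ℕ) : (some a : NS) + some b = some (a + b) := rfl

lemma NS.le_refl' (x : NS) : NS.le x x := by cases x <;> simp [NS.le]

lemma sum_single' {Q : Type} [Fintype Q] [DecidableEq Q] (q : Q) (v : Q → NS)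
    (h : ∀ q', q' ≠ q → v q' = 0) : ∑ q', v q' = v q :=
  Finset.sum_eq_single_of_mem q (Finset.mem_univ q) (fun b _ hb => h b hb)

lemma sum_pair' {Q : Type} [Fintype Q] [DecidableEq Q] {s d : Q} (h : s ≠ d) (v : Q → NS)
    (h0 : ∀ q, q ≠ s → q ≠ d → v q = 0) : ∑ q, v q = v s + v d := by
  rw [← Finset.sum_pair h]
  exact (Finset.sum_subset (Finset.subset_univ _) (fun x _ hx => by
    simp only [Finset.mem_insert, Finset.mem_singleton, not_or] at hx
    exact h0 x hx.1 hx.2)).symm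

/-- Building a sequence of protocol steps from arithmetic conditions,
in the case `src ≠ dst`. -/
lemma protSteps_of_arith {Q : Type} [DecidableEq Q] (t : IOTrans Q) (hsd : t.src ≠ t.dst)
    (γ : Q → ℕ) (k : ℕ) (hk : 1 ≤ k) (h1 : k ≤ γ t.src)
    (h2 : t.obs = t.src → k + 1 ≤ γ t.src) (h3 : t.obs ≠ t.src → 1 ≤ γ t.obs) :
    Relation.TransGen (ProtStep t)
      γ (fun q => γ q - (if q = t.src then k else 0) + (if q = t.dst then k else 0)) := by
  induction k generalizing γ with
  | zero => omega
  | succ k ih =>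
    have hstep : ProtStep t γ
        (fun q => γ q - (if q = t.src then 1 else 0) + (if q = t.dst then 1 else 0)) := by
      refine ⟨?_, by omega, fun ha => by have := h2 ha; rw [ha]; omega, fun q => rfl⟩
      by_cases ha : t.obs = t.src
      · have := h2 ha; rw [ha]; omega
      · exact h3 ha
    rcases Nat.eq_zero_or_pos k with rfl | hk0
    · exact Relation.TransGen.single hstep
    · set γ₁ : Q → ℕ :=
        fun q => γ q - (if q = t.src then 1 else 0) + (if q = t.dst then 1 else 0) with hγ₁
      have hs1 : γ₁ t.src = γ t.src - 1 := by simp [hγ₁, if_neg hsd]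
      have hrest := ih γ₁ hk0 (by rw [hs1]; have := h1; omega)
        (fun ha => by rw [hs1]; have := h2 ha; omega)
        (fun ha => by have := h3 ha; simp only [hγ₁]; rw [if_neg ha]; split <;> omega)
      have heq : (fun q => γ₁ q - (if q = t.src then k else 0) + (if q = t.dst then k else 0))
          = (fun q => γ q - (if q = t.src then (k+1) else 0) + (if q = t.dst then (k+1) else 0)) := by
        funext q
        simp only [hγ₁]
        by_cases hqs : q = t.src
        · have hqd : ¬ q = t.dst := hqs ▸ hsd
          simp only [if_pos hqs, if_neg hqd]; omega
        · by_cases hqd : q = t.dst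
          · rw [if_neg hqs, if_pos hqd, if_neg hqs, if_pos hqd, if_neg hqs, if_pos hqd]; omega
          · rw [if_neg hqs, if_neg hqd, if_neg hqs, if_neg hqd, if_neg hqs, if_neg hqd]; omega
      rw [heq] at hrest
      exact Relation.TransGen.head hstep hrest

/-- Extracting arithmetic conditions from a sequence of protocol steps,
in the case `src ≠ dst`. -/
lemma arith_of_protSteps {Q : Type} [DecidableEq Q] (t : IOTrans Q) (hsd : t.src ≠ t.dst)
    {γ γ' : Q → ℕ} (h : Relation.TransGen (ProtStep t) γ γ') :
    ∃ k, 1 ≤ k ∧ k ≤ γ t.src ∧ (t.obs = t.src → k + 1 ≤ γ t.src) ∧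
      (t.obs ≠ t.src → 1 ≤ γ t.obs) ∧
      γ' = fun q => γ q - (if q = t.src then k else 0) + (if q = t.dst then k else 0) := by
  induction h with
  | single h =>
    exact ⟨1, le_refl 1, h.2.1, fun ha => ha ▸ h.2.2.1 ha, fun _ => h.1,
      funext fun q => h.2.2.2 q⟩
  | tail hab hbc ih =>
    obtain ⟨k, hk, h1, h2, h3, hb⟩ := ih
    rename_i b _
    have hbs : b t.src = γ t.src - k := by
      rw [hb]; simp [if_neg hsd]
    have hbd : b t.dst = γ t.dst + k := by
      rw [hb]; simp [if_neg (Ne.symm hsd)]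
    obtain ⟨hoa, hos, ho2, hof⟩ := hbc
    rw [hbs] at hos
    refine ⟨k + 1, by omega, by omega, fun ha => ?_, h3, funext fun q => ?_⟩
    · have := ho2 ha; rw [ha, hbs] at this; omega
    · have hq := hof q
      rw [hq]
      simp only [hb]
      by_cases hqs : q = t.src
      · have hqd : ¬ q = t.dst := hqs ▸ hsd
        rw [if_pos hqs, if_neg hqd, if_pos hqs, if_neg hqd, if_pos hqs, if_neg hqd]; omega
      · by_cases hqd : q = t.dst
        · rw [if_neg hqs, if_pos hqd, if_neg hqs, if_pos hqd, if_neg hqs, if_pos hqd]; omega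
        · rw [if_neg hqs, if_neg hqd, if_neg hqs, if_neg hqd, if_neg hqs, if_neg hqd]; omega

/-- Characterization of multi-step reachability in the case `src = dst`. -/
lemma protSteps_iff_self {Q : Type} [DecidableEq Q] (t : IOTrans Q) (hsd : t.src = t.dst)
    {γ γ' : Q → ℕ} :
    Relation.TransGen (ProtStep t) γ γ' ↔
      (1 ≤ γ t.obs ∧ 1 ≤ γ t.src ∧ (t.obs = t.src → 2 ≤ γ t.obs) ∧ γ' = γ) := by
  have key : ∀ δ δ' : Q → ℕ, ProtStep t δ δ' → δ' = δ := by
    intro δ δ' hp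
    funext q
    rw [hp.2.2.2 q, ← hsd]
    by_cases hq : q = t.src
    · have := hp.2.1; rw [if_pos hq, ← hq] at *; omega
    · rw [if_neg hq]; omega
  constructor
  · intro h
    induction h with
    | single h => exact ⟨h.1, h.2.1, h.2.2.1, key _ _ h⟩
    | tail hab hbc ih =>
      obtain ⟨ha, hs, h2, hb⟩ := ih
      exact ⟨ha, hs, h2, (key _ _ hbc).trans hb⟩
  · rintro ⟨ha, hs, h2, rfl⟩
    apply Relation.TransGen.single
    refine ⟨ha, hs, h2, fun q => ?_⟩
    rw [← hsd]
    by_cases hq : q = t.src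
    · rw [if_pos hq, hq]; omega
    · rw [if_neg hq]; omega

end Helpers

/-- A step `c →t c'` of the product system (an accelerated step `γ →t^k γ'`,
`k ≥ 1`, together with the matching Rabin transition) exists if and only if
there is a transfer flow `tf ∈ T(t)` with `c →tf c'`. -/
theorem prodStep_iff_flowStep {Q L : Type} [Fintype Q] [DecidableEq Q]
    (Tr : L → IOTrans Q → L) (t : IOTrans Q) (c c' : (Q → ℕ) × L) :
    (Relation.TransGen (ProtStep t) c.1 c'.1 ∧ Tr c.2 t = c'.2) ↔
    ∃ tf ∈ Tset Tr t, FlowStep tf c c' := by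
  constructor
  · rintro ⟨hT, hTr⟩
    by_cases hsd : t.src = t.dst
    · -- src = dst
      obtain ⟨ha, hs, h2, hγ⟩ := (protSteps_iff_self t hsd).1 hT
      refine ⟨⟨fun q q' => if q = q' then
            some (if q = t.obs then (if t.obs = t.src then 2 else 1)
                  else if q = t.src then 1 else 0) else none, c.2, c'.2⟩,
          ⟨hTr, ?_, ?_, ?_, ?_⟩, rfl, rfl,
          fun q q' => if q = q' then some (c.1 q) else none, ?_, ?_, ?_⟩
      · intro h
        have has : t.obs ≠ t.src := by
          rcases h with h | h
          · exact h
          · exact fun e => h (e.trans hsd)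
        have hsa : ¬ t.src = t.obs := fun e => has e.symm
        exact ⟨by simp [has, NS.le], by rw [← hsd]; simp [hsa, NS.le]⟩
      · rintro ⟨e1, e2⟩
        simp [e1, NS.le]
      · intro q _ _
        simp [NS.le]
      · intro q q' hne _
        simp [hne, NS.sharp]
      · intro q q'
        by_cases hqq : q = q'
        · subst hqq
          by_cases hqa : q = t.obs
          · subst hqa
            by_cases has : t.obs = t.src
            · have := h2 has
              rw [has] at this
              simp [has, NS.le]
              omega
            · simp [has, NS.le]
              omega
          · by_cases hqs : q = t.src
            · subst hqs
              simp [hqa, NS.le]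
              omega
            · simp [hqa, hqs, NS.le]
        · simp [hqq, NS.le]
      · intro q
        show some (c.1 q) = ∑ q', if q = q' then some (c.1 q) else none
        rw [sum_single' q (fun q' => if q = q' then some (c.1 q) else none)
          (fun q' h => if_neg (fun e : q = q' => h e.symm))]
        rw [if_pos rfl]
      · intro q
        show some (c'.1 q) = ∑ q', if q' = q then some (c.1 q') else none
        rw [sum_single' q (fun q' => if q' = q then some (c.1 q') else none)
          (fun q' (h : q' ≠ q) => if_neg h)]
        rw [if_pos rfl, hγ]
    · -- src ≠ dst
      obtain ⟨k, hk, h1, h2, h3, hγ'⟩ := arith_of_protSteps t hsd hT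
      have hds : ¬ t.dst = t.src := fun e => hsd e.symm
      refine ⟨⟨fun q q' => if q = q' then some (if q = t.obs then 1 else 0)
            else if q = t.src ∧ q' = t.dst then some 1 else none, c.2, c'.2⟩,
          ⟨hTr, ?_, ?_, ?_, ?_⟩, rfl, rfl,
          fun q q' => if q = q' then some (c.1 q - (if q = t.src then k else 0))
            else if q = t.src ∧ q' = t.dst then some k else none, ?_, ?_, ?_⟩
      · intro _
        exact ⟨by simp [NS.le], by simp [hsd, NS.le]⟩
      · rintro ⟨e1, e2⟩
        exact absurd (e1.symm.trans e2) hsd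
      · intro q _ _
        simp [NS.le]
      · intro q q' hne hpair
        have hp2 : ¬(q = t.src ∧ q' = t.dst) := fun h => hpair (by rw [h.1, h.2])
        simp [hne, hp2, NS.sharp]
      · intro q q'
        by_cases hqq : q = q'
        · subst hqq
          by_cases hqa : q = t.obs
          · subst hqa
            by_cases hqs : t.obs = t.src
            · have := h2 hqs
              simp [hqs, NS.le]
              omega
            · have := h3 hqs
              simp [hqs, NS.le]
              omega
          · simp [hqa, NS.le]
        · by_cases hp : q = t.src ∧ q' = t.dst
          · obtain ⟨e1, e2⟩ := hp
            simp [hqq, e1, e2, hsd, NS.le]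
            omega
          · simp [hqq, hp, NS.le]
      · intro q
        show some (c.1 q) = ∑ q', if q = q' then some (c.1 q - (if q = t.src then k else 0))
          else if q = t.src ∧ q' = t.dst then some k else none
        by_cases hqs : q = t.src
        · rw [sum_pair' hsd (fun q' => if q = q' then some (c.1 q - (if q = t.src then k else 0))
              else if q = t.src ∧ q' = t.dst then some k else none)
            (fun q'' hq1 hq2 => (if_neg (fun e : q = q'' => hq1 (e.symm.trans hqs))).trans
              (if_neg (fun h : q = t.src ∧ q'' = t.dst => hq2 h.2)))]
          simp [hqs, hsd, NS.some_add_some]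
          omega
        · rw [sum_single' q (fun q' => if q = q' then some (c.1 q - (if q = t.src then k else 0))
              else if q = t.src ∧ q' = t.dst then some k else none)
            (fun q' h => (if_neg (fun e : q = q' => h e.symm)).trans
              (if_neg (fun hp : q = t.src ∧ q' = t.dst => hqs hp.1)))]
          simp [hqs]
      · intro q
        simp only [hγ']
        show some (c.1 q - (if q = t.src then k else 0) + (if q = t.dst then k else 0)) =
          ∑ q', if q' = q then some (c.1 q' - (if q' = t.src then k else 0))
            else if q' = t.src ∧ q = t.dst then some k else none
        by_cases hqd : q = t.dst
        · rw [sum_pair' hsd (fun q' => if q' = q then some (c.1 q' - (if q' = t.src then k else 0))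
              else if q' = t.src ∧ q = t.dst then some k else none)
            (fun q'' hq1 hq2 => (if_neg (fun e : q'' = q => hq2 (e.trans hqd))).trans
              (if_neg (fun h : q'' = t.src ∧ q = t.dst => hq1 h.1)))]
          simp [hqd, hsd, hds, NS.some_add_some]
          omega
        · rw [sum_single' q (fun q' => if q' = q then some (c.1 q' - (if q' = t.src then k else 0))
              else if q' = t.src ∧ q = t.dst then some k else none)
            (fun q' h => (if_neg h).trans
              (if_neg (fun hp : q' = t.src ∧ q = t.dst => hqd hp.2)))]
          simp [hqd]
  · rintro ⟨tf, ⟨hTrm, hc1, hc2, hdiag, hoff⟩, hsrc, hdst, g, hge, hrow, hcol⟩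
    refine ⟨?_, by rw [hsrc, hdst]; exact hTrm⟩
    by_cases hsd : t.src = t.dst
    · -- src = dst
      have hoffg : ∀ q q', q ≠ q' → g q q' = 0 := by
        intro q q' hne
        have hpair : (q, q') ≠ (t.src, t.dst) := by
          intro h
          rw [Prod.mk.injEq] at h
          exact hne (h.1.trans (hsd.trans h.2.symm))
        have h5 := hge q q'
        rw [hoff q q' hne hpair] at h5
        exact NS.none_le h5
      have hgd : ∀ q, g q q = some (c.1 q) := by
        intro q
        have h6 := hrow q
        rw [sum_single' q _ (fun q' h => hoffg q q' (Ne.symm h))] at h6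
        exact h6.symm
      have hgc : ∀ q, g q q = some (c'.1 q) := by
        intro q
        have h6 := hcol q
        rw [sum_single' q _ (fun q' h => hoffg q' q h)] at h6
        exact h6.symm
      have hγeq : c'.1 = c.1 := funext fun q =>
        (Option.some.inj ((hgd q).symm.trans (hgc q))).symm
      rw [protSteps_iff_self t hsd]
      by_cases has : t.obs = t.src
      · obtain ⟨m, hm, h2m⟩ := NS.le_some (hc2 ⟨has, has.trans hsd⟩)
        have h7 := hge t.obs t.obs
        rw [hm, hgd, NS.some_le_some] at h7
        refine ⟨by omega, ?_, fun _ => by omega, hγeq⟩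
        rw [← has]; omega
      · obtain ⟨hfa, hfsd⟩ := hc1 (Or.inl has)
        obtain ⟨m, hm, h1m⟩ := NS.le_some hfa
        have h7 := hge t.obs t.obs
        rw [hm, hgd, NS.some_le_some] at h7
        obtain ⟨m', hm', h1m'⟩ := NS.le_some hfsd
        have h8 := hge t.src t.dst
        have hgsd : g t.src t.dst = some (c.1 t.src) := by
          rw [← hsd]; exact hgd t.src
        rw [hm', hgsd, NS.some_le_some] at h8
        exact ⟨by omega, by omega, fun e => absurd e has, hγeq⟩
    · -- src ≠ dst
      have hor : t.obs ≠ t.src ∨ t.obs ≠ t.dst := by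
        by_cases h : t.obs = t.src
        · exact Or.inr (fun e => hsd (h.symm.trans e))
        · exact Or.inl h
      obtain ⟨hfa, hfsd⟩ := hc1 hor
      obtain ⟨m1, hm1, h1m1⟩ := NS.le_some hfa
      obtain ⟨m2, hm2, h1m2⟩ := NS.le_some hfsd
      have h8 := hge t.src t.dst
      rw [hm2] at h8
      obtain ⟨k, hgsd, hm2k⟩ := NS.le_some h8
      have hoffg : ∀ q q', q ≠ q' → (q, q') ≠ (t.src, t.dst) → g q q' = 0 := by
        intro q q' hne hpair
        have h5 := hge q q'
        rw [hoff q q' hne hpair] at h5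
        exact NS.none_le h5
      have hdg : ∀ q, ∃ m, g q q = some m := by
        intro q
        by_cases hqa : q = t.obs
        · have h5 := hge q q
          rw [hqa, hm1] at h5
          obtain ⟨m, hm, _⟩ := NS.le_some h5
          exact ⟨m, by rw [hqa]; exact hm⟩
        · have hd := hdiag q hqa (by
            intro h
            rw [Prod.mk.injEq] at h
            exact hsd (h.1.symm.trans h.2))
          obtain ⟨m0, hm0, _⟩ := NS.le_some hd
          have h5 := hge q q
          rw [hm0] at h5
          obtain ⟨m, hm, _⟩ := NS.le_some h5
          exact ⟨m, hm⟩
      choose δ hδ using hdg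
      have hδa : 1 ≤ δ t.obs := by
        have h5 := hge t.obs t.obs
        rw [hm1, hδ, NS.some_le_some] at h5
        omega
      have hrow' : ∀ q, q ≠ t.src → c.1 q = δ q := by
        intro q hq
        have h6 := hrow q
        rw [sum_single' q _ (fun q' h => hoffg q q' (Ne.symm h)
          (fun hp => hq (by rw [Prod.mk.injEq] at hp; exact hp.1))), hδ] at h6
        exact Option.some.inj h6
      have hrows : c.1 t.src = δ t.src + k := by
        have h6 := hrow t.src
        rw [sum_pair' hsd _ (fun q'' hq1 hq2 => hoffg t.src q'' (Ne.symm hq1)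
          (fun hp => hq2 (by rw [Prod.mk.injEq] at hp; exact hp.2))),
          hδ, hgsd, NS.some_add_some] at h6
        exact Option.some.inj h6
      have hcol' : ∀ q, q ≠ t.dst → c'.1 q = δ q := by
        intro q hq
        have h6 := hcol q
        rw [sum_single' q _ (fun q' h => hoffg q' q h
          (fun hp => hq (by rw [Prod.mk.injEq] at hp; exact hp.2))), hδ] at h6
        exact Option.some.inj h6
      have hcold : c'.1 t.dst = k + δ t.dst := by
        have h6 := hcol t.dst
        rw [sum_pair' hsd _ (fun q'' hq1 hq2 => hoffg q'' t.dst hq2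
          (fun hp => hq1 (by rw [Prod.mk.injEq] at hp; exact hp.1))),
          hgsd, hδ, NS.some_add_some] at h6
        exact Option.some.inj h6
      have hmain := protSteps_of_arith t hsd c.1 k (by omega)
        (by rw [hrows]; omega)
        (fun e => by
          have := hδa
          rw [e] at this
          rw [hrows]
          omega)
        (fun e => by rw [hrow' t.obs e]; exact hδa)
      have heq : c'.1 = fun q =>
          c.1 q - (if q = t.src then k else 0) + (if q = t.dst then k else 0) := by
        funext q
        by_cases hqd : q = t.dst
        · rw [hqd, hcold, if_neg (fun e : t.dst = t.src => hsd e.symm), if_pos rfl,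
            hrow' t.dst (fun e => hsd e.symm)]
          omega
        · rw [hcol' q hqd, if_neg hqd]
          by_cases hqs : q = t.src
          · rw [if_pos hqs, hqs, hrows]
            omega
          · rw [if_neg hqs, hrow' q hqs]
            omega
      rw [heq]
      exact hmain
end

section
/- With U_k := the upward closure (in (ℕ^d, ≤ componentwise)) of χ(T(Δ^{≤k})) ∪ V₀, where V₀ is the set of vectors whose last two components are (N+1, 0) or (0, N+1), it holds that U_k ∩ χ(𝔽) = χ(T(Δ^{≤k})), where χ(𝔽) denotes the image of all transfer flows. -/
/-- The product extended to sets of transfer flows. -/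
def setProd {Q L : Type} [Fintype Q] (F F' : Set (TF Q L)) : Set (TF Q L) :=
  ⋃ t1 ∈ F, ⋃ t2 ∈ F', TF.prod t1 t2

/-- `T(ε)`: transfer flows of the empty sequence. -/
def Teps {Q L : Type} : Set (TF Q L) :=
  { tf | tf.src = tf.dst ∧ (∀ q, tf.f q q ≠ NS.sharp) ∧
    ∀ q q', q ≠ q' → tf.f q q' = NS.sharp }

/-- `T(w)` for a word `w = t1 … tk`: the product `T(t1) ⊗ … ⊗ T(tk)`. -/
def Tword {Q L : Type} [Fintype Q] [DecidableEq Q] (Tr : L → IOTrans Q → L) :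
    List (IOTrans Q) → Set (TF Q L)
  | [] => Teps
  | t :: w => setProd (Tset Tr t) (Tword Tr w)

/-- `T(Δ^{≤k})`: transfer flows of sequences of at most `k` transitions. -/
def TBounded {Q L : Type} [Fintype Q] [DecidableEq Q] (Tr : L → IOTrans Q → L)
    (k : ℕ) : Set (TF Q L) :=
  ⋃ w ∈ { w : List (IOTrans Q) | w.length ≤ k }, Tword Tr w

/-- `T(Δ^*)`: transfer flows of all finite sequences of transitions. -/
def TStar {Q L : Type} [Fintype Q] [DecidableEq Q] (Tr : L → IOTrans Q → L) :
    Set (TF Q L) :=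
  ⋃ w : List (IOTrans Q), Tword Tr w

/-- Vectors of `ℕ^d` with `d = |Q|² + 2`: one coordinate per pair of states,
plus two extra coordinates. -/
abbrev Vec (Q : Type) := ((Q × Q) ⊕ Fin 2) → ℕ

/-- `N = |L|² · 2^{|Q|²}`. -/
def Ncard (Q L : Type) [Fintype Q] [Fintype L] : ℕ :=
  (Fintype.card L) ^ 2 * 2 ^ ((Fintype.card Q) ^ 2)

/-- The set `S` of `#`-positions of an agent part. -/
def sharpPos {Q : Type} (f : Q → Q → NS) : Q → Q → Bool :=
  fun q q' => (f q q').isNone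

/-- The encoding `χ` of a transfer flow into sets of vectors of `ℕ^d`, given a
map `θ` from pairs of control locations and `#`-position sets to `{1,…,N}`:
coordinates at pairs `(q,q')` with `f(q,q') ≠ #` carry `f(q,q')`, the other
such coordinates are unconstrained, and the two last coordinates are
`θ(ℓ,ℓ',S)` and `N + 1 − θ(ℓ,ℓ',S)`. -/
def chi {Q L : Type} (N : ℕ) (θ : L × L × (Q → Q → Bool) → ℕ) (tf : TF Q L) :
    Set (Vec Q) :=
  { v | (∀ q q' n, tf.f q q' = some n → v (Sum.inl (q, q')) = n) ∧
    v (Sum.inr 0) = θ (tf.src, tf.dst, sharpPos tf.f) ∧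
    v (Sum.inr 1) = N + 1 - θ (tf.src, tf.dst, sharpPos tf.f) }

/-- The image of a set of transfer flows under the encoding `χ`. -/
def chiSet {Q L : Type} (N : ℕ) (θ : L × L × (Q → Q → Bool) → ℕ)
    (F : Set (TF Q L)) : Set (Vec Q) :=
  ⋃ tf ∈ F, chi N θ tf

/-- `V₀`: vectors whose last two components are `(N+1, 0)` or `(0, N+1)`. -/
def V0 {Q : Type} (N : ℕ) : Set (Vec Q) :=
  { v | (v (Sum.inr 0) = N + 1 ∧ v (Sum.inr 1) = 0) ∨
        (v (Sum.inr 0) = 0 ∧ v (Sum.inr 1) = N + 1) }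

/-- Upward closure with respect to the componentwise order on `ℕ^d`. -/
def upClosure {Q : Type} (A : Set (Vec Q)) : Set (Vec Q) :=
  { v | ∃ u ∈ A, ∀ i, u i ≤ v i }

/-- `U_k`: the upward closure of `χ(T(Δ^{≤k})) ∪ V₀`. -/
def Uset {Q L : Type} [Fintype Q] [DecidableEq Q] (N : ℕ)
    (θ : L × L × (Q → Q → Bool) → ℕ) (Tr : L → IOTrans Q → L) (k : ℕ) :
    Set (Vec Q) :=
  upClosure (chiSet N θ (TBounded Tr k) ∪ V0 N)

/-!
The last two coordinates of a vector of `χ(tf)` are `θ(ℓ,ℓ',S)` and `N + 1 − θ(ℓ,ℓ',S)` with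
`1 ≤ θ ≤ N`. Hence no vector of `V₀` lies below an encoding, and if an encoding of `tf` lies below
an encoding of `tf'` the two `θ`-values coincide; injectivity of `θ` then gives equal control parts
and `#`-positions, so the componentwise order on the remaining coordinates is `tf ⪯ tf'`.
Thus `U ∩ χ(𝔽) = χ(F)` for every `⪯`-upward-closed `F`, and `T(Δ^{≤k})` is upward closed because
`⊗` is: the surplus of an entry of the product can be added to one non-`#` summand of its witness.
-/

namespace NS

lemma le_refl (x : NS) : NS.le x x := by cases x <;> simp [NS.le]

lemma le_trans {x y z : NS} (h1 : NS.le x y) (h2 : NS.le y z) : NS.le x z := by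
  cases x <;> cases y <;> cases z <;> simp only [NS.le] at *
  exact Nat.le_trans h1 h2

lemma none_le_iff {x : NS} : NS.le none x ↔ x = none := by
  cases x <;> simp [NS.le]

lemma some_le_iff {n : ℕ} {x : NS} : NS.le (some n) x ↔ ∃ m, x = some m ∧ n ≤ m := by
  cases x <;> simp [NS.le]

lemma some_add_some_s14 (a b : ℕ) : (some a : NS) + some b = some (a + b) := rfl

lemma add_le_add {a b c d : NS} (h1 : NS.le a b) (h2 : NS.le c d) :
    NS.le (a + c) (b + d) := by
  change NS.le (NS.add a c) (NS.add b d)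
  cases a <;> cases b <;> cases c <;> cases d <;> simp only [NS.le, NS.add] at * <;> omega

lemma sum_le_sum {ι : Type*} (s : Finset ι) {f g : ι → NS} (h : ∀ i ∈ s, NS.le (f i) (g i)) :
    NS.le (∑ i ∈ s, f i) (∑ i ∈ s, g i) := by
  classical
  induction s using Finset.induction with
  | empty => exact NS.le_refl _
  | insert j s hj ih =>
    rw [Finset.sum_insert hj, Finset.sum_insert hj]
    exact add_le_add (h j (Finset.mem_insert_self j s))
      (ih fun i hi => h i (Finset.mem_insert_of_mem hi))

lemma exists_le_of_sum_le {ι : Type*} [Fintype ι] [DecidableEq ι] {a : ι → NS} {y : NS}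
    (h : NS.le (∑ i, a i) y) : ∃ b : ι → NS, (∀ i, NS.le (a i) (b i)) ∧ ∑ i, b i = y := by
  cases hs : ∑ i, a i with
  | none =>
    rw [hs, none_le_iff] at h
    exact ⟨a, fun i => NS.le_refl _, hs.trans h.symm⟩
  | some n =>
    obtain ⟨m, rfl, hnm⟩ := some_le_iff.mp (hs ▸ h)
    obtain ⟨j, c, hj⟩ : ∃ j c, a j = some c := by
      by_contra! hnone
      have hzero : ∑ i, a i = 0 :=
        Finset.sum_eq_zero fun i _ => Option.eq_none_iff_forall_ne_some.mpr (hnone i)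
      exact Option.some_ne_none n (hs.symm.trans hzero)
    refine ⟨a + Pi.single j (some (m - n)), fun i => ?_, ?_⟩
    · by_cases hij : i = j
      · subst hij
        simp only [Pi.add_apply, Pi.single_eq_same, hj, some_add_some_s14]
        exact Nat.le_add_right c (m - n)
      · simpa only [Pi.add_apply, Pi.single_eq_of_ne hij, add_zero] using NS.le_refl (a i)
    · simp only [Pi.add_apply]
      rw [Finset.sum_add_distrib, hs, Finset.sum_pi_single', if_pos (Finset.mem_univ j),
        some_add_some_s14, Nat.add_sub_cancel' hnm]

end NS

section Upward

variable {Q L : Type}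

lemma TF.prod_upward [Fintype Q] {t1 t2 tf tf' : TF Q L}
    (h : tf ∈ TF.prod t1 t2) (hle : TF.le tf tf') : tf' ∈ TF.prod t1 t2 := by
  classical
  obtain ⟨h12, hsrc, hdst, H, hsum, h1, h2⟩ := h
  obtain ⟨hs, hd, hf⟩ := hle
  choose G hHG hG using fun q1 q3 =>
    NS.exists_le_of_sum_le (a := fun q2 => H q1 q2 q3) (hsum q1 q3 ▸ hf q1 q3)
  refine ⟨h12, hs ▸ hsrc, hd ▸ hdst, fun q1 q2 q3 => G q1 q3 q2, hG, fun q1 q2 => ?_,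
    fun q2 q3 => ?_⟩
  · exact NS.le_trans (h1 q1 q2) (NS.sum_le_sum _ fun q3 _ => hHG q1 q3 q2)
  · exact NS.le_trans (h2 q2 q3) (NS.sum_le_sum _ fun q1 _ => hHG q1 q3 q2)

lemma Teps_upward {tf tf' : TF Q L} (h : tf ∈ Teps) (hle : TF.le tf tf') : tf' ∈ Teps := by
  obtain ⟨hsd, hdiag, hoff⟩ := h
  obtain ⟨hs, hd, hf⟩ := hle
  refine ⟨hs ▸ hd ▸ hsd, fun q hq => ?_, fun q q' hqq' => ?_⟩
  · obtain ⟨n, hn⟩ := Option.ne_none_iff_exists'.mp (hdiag q)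
    obtain ⟨m, hm, -⟩ := NS.some_le_iff.mp (hn ▸ hf q q)
    exact Option.some_ne_none m (hm ▸ hq)
  · have h := hf q q'
    rw [hoff q q' hqq'] at h
    exact NS.none_le_iff.mp h

lemma Tword_upward [Fintype Q] [DecidableEq Q] (Tr : L → IOTrans Q → L) (w : List (IOTrans Q))
    {tf tf' : TF Q L} (h : tf ∈ Tword Tr w) (hle : TF.le tf tf') : tf' ∈ Tword Tr w := by
  cases w with
  | nil => exact Teps_upward h hle
  | cons t w =>
    simp only [Tword, setProd, Set.mem_iUnion] at h ⊢
    obtain ⟨t1, ht1, t2, ht2, hp⟩ := h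
    exact ⟨t1, ht1, t2, ht2, TF.prod_upward hp hle⟩

lemma TBounded_upward [Fintype Q] [DecidableEq Q] (Tr : L → IOTrans Q → L) (k : ℕ)
    {tf tf' : TF Q L} (h : tf ∈ TBounded Tr k) (hle : TF.le tf tf') : tf' ∈ TBounded Tr k := by
  simp only [TBounded, Set.mem_iUnion] at h ⊢
  obtain ⟨w, hw, hmem⟩ := h
  exact ⟨w, hw, Tword_upward Tr w hmem hle⟩

end Upward

section Encoding

variable {Q L : Type} {N : ℕ} {θ : L × L × (Q → Q → Bool) → ℕ}

lemma mem_chiSet {F : Set (TF Q L)} {v : Vec Q} :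
    v ∈ chiSet N θ F ↔ ∃ tf ∈ F, v ∈ chi N θ tf :=
  Set.mem_iUnion₂.trans (by simp only [exists_prop])

lemma not_V0_le_chi (hθ : ∀ x, θ x ∈ Set.Icc 1 N) {tf : TF Q L} {u v : Vec Q}
    (hu : u ∈ V0 N) (hv : v ∈ chi N θ tf) : ¬ u ≤ v := by
  intro huv
  obtain ⟨-, hv0, hv1⟩ := hv
  obtain ⟨hθ1, hθN⟩ := hθ (tf.src, tf.dst, sharpPos tf.f)
  have h0 : u (Sum.inr 0) ≤ v (Sum.inr 0) := huv _
  have h1 : u (Sum.inr 1) ≤ v (Sum.inr 1) := huv _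
  rcases hu with ⟨hu0, -⟩ | ⟨-, hu1⟩
  · rw [hu0, hv0] at h0
    omega
  · rw [hu1, hv1] at h1
    omega

lemma TF.le_of_chi_le (hθinj : θ.Injective) (hθN : ∀ x, θ x ≤ N) {tf tf' : TF Q L}
    {u v : Vec Q} (hu : u ∈ chi N θ tf) (hv : v ∈ chi N θ tf') (huv : u ≤ v) :
    TF.le tf tf' := by
  obtain ⟨hu, hu0, hu1⟩ := hu
  obtain ⟨hv, hv0, hv1⟩ := hv
  have h0 : u (Sum.inr 0) ≤ v (Sum.inr 0) := huv _
  have h1 : u (Sum.inr 1) ≤ v (Sum.inr 1) := huv _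
  rw [hu0, hv0] at h0
  rw [hu1, hv1] at h1
  have hθtf' := hθN (tf'.src, tf'.dst, sharpPos tf'.f)
  have hθeq : θ (tf.src, tf.dst, sharpPos tf.f) = θ (tf'.src, tf'.dst, sharpPos tf'.f) := by
    omega
  obtain ⟨hsrc, hrest⟩ := Prod.mk.inj (hθinj hθeq)
  obtain ⟨hdst, hsharp⟩ := Prod.mk.inj hrest
  refine ⟨hsrc, hdst, fun q q' => ?_⟩
  have hsq : (tf.f q q').isNone = (tf'.f q q').isNone := congrFun (congrFun hsharp q) q'
  cases hf : tf.f q q' <;> cases hf' : tf'.f q q' <;> simp [hf, hf'] at hsq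
  · trivial
  · exact (hu q q' _ hf).symm.trans_le ((huv (Sum.inl (q, q'))).trans_eq (hv q q' _ hf'))

lemma upClosure_inter_chiSet_univ (hθ : ∀ x, θ x ∈ Set.Icc 1 N) (hθinj : θ.Injective)
    {F : Set (TF Q L)} (hF : ∀ ⦃tf tf'⦄, tf ∈ F → TF.le tf tf' → tf' ∈ F) :
    upClosure (chiSet N θ F ∪ V0 N) ∩ chiSet N θ Set.univ = chiSet N θ F := by
  ext v
  constructor
  · rintro ⟨⟨u, hu | hu, huv⟩, hv⟩ <;> obtain ⟨tf', -, hv⟩ := mem_chiSet.mp hv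
    · obtain ⟨tf, htf, hu⟩ := mem_chiSet.mp hu
      have hle : TF.le tf tf' := TF.le_of_chi_le hθinj (fun x => (hθ x).2) hu hv huv
      exact mem_chiSet.mpr ⟨tf', hF htf hle, hv⟩
    · exact absurd huv (not_V0_le_chi hθ hu hv)
  · intro hv
    obtain ⟨tf, -, htf⟩ := mem_chiSet.mp hv
    exact ⟨⟨v, Or.inl hv, fun _ => le_rfl⟩, mem_chiSet.mpr ⟨tf, Set.mem_univ tf, htf⟩⟩

end Encoding

/-- `U_k ∩ χ(𝔽) = χ(T(Δ^{≤k}))`: among vectors encoding transfer flows, those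
in `U_k` are exactly the encodings of transfer flows of `T(Δ^{≤k})`. -/
theorem Uset_inter_chi {Q L : Type} [Fintype Q] [Fintype L] [DecidableEq Q]
    (θ : L × L × (Q → Q → Bool) → ℕ)
    (hθ : Set.BijOn θ Set.univ (Set.Icc 1 (Ncard Q L)))
    (Tr : L → IOTrans Q → L) (k : ℕ) :
    Uset (Ncard Q L) θ Tr k ∩ chiSet (Ncard Q L) θ (Set.univ : Set (TF Q L)) =
      chiSet (Ncard Q L) θ (TBounded Tr k) :=
  upClosure_inter_chiSet_univ (fun x => hθ.mapsTo (Set.mem_univ x))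
    (Set.injOn_univ.mp hθ.injOn) fun _ _ => TBounded_upward Tr k
end
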